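/- Let Σ be a finite set with |Σ| = n ≥ 1, E a finite set, C : E → P(Σ) with each C(e) nonempty and C(e) ≠ Σ unless specified, and ω : E → ℝ. Define the cophenetic game CV : P(Σ) → ℝ by CV(∅) = 0 and CV(X) = Σ_{e : X ⊆ C(e)} ω(e) for X ≠ ∅. Then for every a ∈ Σ, the Shapley value of CV on a equals (1/n)·Σ_{e} ω(e) − Σ_{e : a ∉ C(e)} ω(e)/(n − |C(e)|). -/

import Mathlib

open Finset
open scoped Nat

/-!
The cophenetic game is `∑ e, ω e • (𝟙[X ⊆ C e] - 𝟙[X = ∅])` and the Shapley value is linear.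
Adding `a` to a coalition `Y` never changes `𝟙[· ⊆ S]` when `a ∈ S`; when `a ∉ S` its marginal
contribution is `-𝟙[Y ⊆ S]`, so the Shapley value is `-∑_{Y ⊆ S} |Y|! (n-1-|Y|)! / n!`,
a telescoping sum equal to `-1 / (n - |S|)`. The indicator of `∅` contributes `-1/n`.
-/

lemma sum_descFactorial_mul_factorial {m n : ℕ} (hmn : m < n) :
    ∑ k ∈ range (m + 1), (m.descFactorial k * (n - 1 - k)! : ℝ) = n ! / ((n - m : ℕ) : ℝ) := by
  set g : ℕ → ℝ := fun k => m.descFactorial k * (n - k)!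
  have hnm : ((n - m : ℕ) : ℝ) ≠ 0 := Nat.cast_ne_zero.mpr (by omega)
  -- `g k - g (k + 1) = m.descFactorial k * (n - 1 - k)! * ((n - k) - (m - k))`
  have step : ∀ k ∈ range (m + 1),
      (m.descFactorial k * (n - 1 - k)! : ℝ) = (g k - g (k + 1)) / ((n - m : ℕ) : ℝ) := by
    intro k hk
    have hkm : k ≤ m := Nat.lt_succ_iff.mp (mem_range.mp hk)
    rw [eq_div_iff hnm]
    simp only [g, Nat.descFactorial_succ, show n - k = n - 1 - k + 1 by omega, Nat.factorial_succ,
      show n - (k + 1) = n - 1 - k by omega]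
    push_cast [Nat.cast_sub hkm, Nat.cast_sub hmn.le, Nat.cast_sub (show k ≤ n - 1 by omega),
      Nat.cast_sub (show 1 ≤ n by omega)]
    ring
  rw [sum_congr rfl step, ← sum_div, sum_range_sub']
  simp [g]

noncomputable def shapleyWeight (n k : ℕ) : ℝ := ((k - 1)! * (n - k)! : ℝ) / n !

lemma shapleyWeight_one {n : ℕ} (hn : 0 < n) : shapleyWeight n 1 = 1 / n := by
  rw [shapleyWeight, Nat.sub_self, Nat.factorial_zero, ← Nat.mul_factorial_pred hn.ne']
  have : ((n - 1)! : ℝ) ≠ 0 := by positivity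
  push_cast
  field_simp

lemma sum_powerset_shapleyWeight_succ {β : Type*} {n : ℕ} {S : Finset β} (hS : S.card < n) :
    ∑ Y ∈ S.powerset, shapleyWeight n (Y.card + 1) = 1 / ((n - S.card : ℕ) : ℝ) := by
  rw [sum_powerset_apply_card (fun k => shapleyWeight n (k + 1))]
  have hterm : ∀ k ∈ range (S.card + 1), S.card.choose k • shapleyWeight n (k + 1) =
      (S.card.descFactorial k * (n - 1 - k)! : ℝ) / n ! := by
    intro k _
    rw [nsmul_eq_mul, shapleyWeight, Nat.descFactorial_eq_factorial_mul_choose, Nat.add_sub_cancel,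
      show n - (k + 1) = n - 1 - k by omega]
    push_cast
    ring
  rw [sum_congr rfl hterm, ← sum_div, sum_descFactorial_mul_factorial hS]
  have : (n ! : ℝ) ≠ 0 := by positivity
  field_simp

section Shapley

variable {α : Type*} [Fintype α] [DecidableEq α]

noncomputable def shapleyValue (a : α) : (Finset α → ℝ) →ₗ[ℝ] ℝ where
  toFun W := ∑ X ∈ univ.powerset.filter (fun X => a ∈ X),
    shapleyWeight (Fintype.card α) X.card * (W X - W (X.erase a))
  map_add' W V := by simp only [Pi.add_apply, ← sum_add_distrib]; congr! 1; ring
  map_smul' c W := by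
    simp only [Pi.smul_apply, smul_eq_mul, RingHom.id_apply, mul_sum]; congr! 1; ring

lemma shapleyValue_eq_sum_powerset_erase (a : α) (W : Finset α → ℝ) :
    shapleyValue a W = ∑ Y ∈ (univ.erase a).powerset,
      shapleyWeight (Fintype.card α) (Y.card + 1) * (W (insert a Y) - W Y) := by
  have hmem : ∀ Y ∈ (univ.erase a).powerset, a ∉ Y := fun Y hY h =>
    (mem_erase.mp (mem_powerset.mp hY h)).1 rfl
  rw [shapleyValue, LinearMap.coe_mk, AddHom.coe_mk, sum_filter]
  conv_lhs => rw [← insert_erase (mem_univ a), sum_powerset_insert (notMem_erase a univ)]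
  rw [sum_congr rfl fun Y hY => if_neg (hmem Y hY), sum_const_zero, zero_add]
  refine sum_congr rfl fun Y hY => ?_
  rw [if_pos (mem_insert_self a Y), erase_insert (hmem Y hY), card_insert_of_notMem (hmem Y hY)]

def subsetGame (S X : Finset α) : ℝ := if X ⊆ S then 1 else 0

lemma shapleyValue_single_empty (a : α) :
    shapleyValue a (Pi.single ∅ 1) = -shapleyWeight (Fintype.card α) 1 := by
  rw [shapleyValue_eq_sum_powerset_erase]
  simp [Pi.single_apply, insert_ne_empty]

lemma shapleyValue_subsetGame (a : α) (S : Finset α) :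
    shapleyValue a (subsetGame S) =
      if a ∈ S then 0 else -(1 / ((Fintype.card α - S.card : ℕ) : ℝ)) := by
  rw [shapleyValue_eq_sum_powerset_erase]
  split_ifs with ha
  · refine sum_eq_zero fun Y _ => ?_
    simp [subsetGame, insert_subset_iff, ha]
  · have hS : S ⊆ univ.erase a := fun x hx => mem_erase.mpr ⟨fun h => ha (h ▸ hx), mem_univ x⟩
    simp only [subsetGame, insert_subset_iff, ha, false_and, if_false, zero_sub, mul_neg, mul_ite,
      mul_one, mul_zero, sum_neg_distrib, ← sum_filter]
    rw [← sum_powerset_shapleyWeight_succ (card_lt_univ_of_notMem ha)]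
    congr 2
    ext Y
    simp only [mem_filter, mem_powerset]
    exact ⟨And.right, fun h => ⟨h.trans hS, h⟩⟩

end Shapley

theorem stmt_4_general {α E : Type*} [Fintype α] [DecidableEq α] [Fintype E]
    (C : E → Finset α) (ω : E → ℝ)
    (CV : Finset α → ℝ) (hCV0 : CV ∅ = 0)
    (hCV : ∀ X : Finset α, X ≠ ∅ → CV X = ∑ e ∈ univ.filter (fun e => X ⊆ C e), ω e)
    (a : α) :
    ∑ X ∈ univ.powerset.filter (fun X => a ∈ X),
      (((X.card - 1).factorial * (Fintype.card α - X.card).factorial : ℝ) /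
        (Fintype.card α).factorial) * (CV X - CV (X.erase a)) =
    (1 / (Fintype.card α : ℝ)) * ∑ e, ω e -
      ∑ e ∈ univ.filter (fun e => a ∉ C e),
        ω e / ((Fintype.card α - (C e).card : ℕ) : ℝ) := by
  have hCV_eq : CV = ∑ e, ω e • (subsetGame (C e) - Pi.single ∅ 1) := by
    funext X
    by_cases hX : X = ∅
    · simp [hX, hCV0, subsetGame]
    · simp [hCV X hX, hX, subsetGame, sum_filter]
  change shapleyValue a CV = _
  simp only [hCV_eq, map_sum, map_smul, map_sub, shapleyValue_subsetGame, shapleyValue_single_empty,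
    shapleyWeight_one (Fintype.card_pos_iff.mpr ⟨a⟩), smul_eq_mul, sum_filter, mul_sum]
  rw [← sum_sub_distrib]
  refine sum_congr rfl fun e _ => ?_
  split_ifs <;> ring

theorem stmt_4 {α E : Type*} [Fintype α] [DecidableEq α] [Fintype E]
    (hn : 1 ≤ Fintype.card α)
    (C : E → Finset α) (hC : ∀ e, (C e).Nonempty) (ω : E → ℝ)
    (CV : Finset α → ℝ) (hCV0 : CV ∅ = 0)
    (hCV : ∀ X : Finset α, X ≠ ∅ → CV X = ∑ e ∈ univ.filter (fun e => X ⊆ C e), ω e)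
    (a : α) :
    ∑ X ∈ univ.powerset.filter (fun X => a ∈ X),
      (((X.card - 1).factorial * (Fintype.card α - X.card).factorial : ℝ) /
        (Fintype.card α).factorial) * (CV X - CV (X.erase a)) =
    (1 / (Fintype.card α : ℝ)) * ∑ e, ω e -
      ∑ e ∈ univ.filter (fun e => a ∉ C e),
        ω e / ((Fintype.card α - (C e).card : ℕ) : ℝ) :=
  stmt_4_general C ω CV hCV0 hCV a
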